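/- If 𝔐^u_ψ ⊆ 𝔐^u_φ for φ ∈ C(ℝ,X) and ψ ∈ C(ℝ,Y), then 𝔑^u_ψ ⊆ 𝔑^u_φ. -/

import Mathlib

/-!
Interleave `t ∈ 𝔑^u_ψ` with the zero sequence into `r`. Along `r` the translates
`ψ^{s+rₙ}` still converge to `ψ^s` uniformly in `s`, so by hypothesis the translates `φ^{s+rₙ}`
converge uniformly to some `Φ s`. The zero subsequence makes `Φ s` Bebutov-indistinguishable
from `φ^s`, and the `t` subsequence then gives `φ^{s+tₙ} → φ^s` uniformly.
-/

open Filter Topology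

/-- The Bebutov metric on `C(ℝ, X)`:
`d(φ₁,φ₂) = sup_{T>0} min ( max_{|t| ≤ T} ρ(φ₁(t), φ₂(t)), 1/T )`. -/
noncomputable def bebutovDist {X : Type*} [MetricSpace X] (φ ψ : C(ℝ, X)) : ℝ :=
  ⨆ T : Set.Ioi (0 : ℝ),
    min (⨆ t : Set.Icc (-(T : ℝ)) (T : ℝ), dist (φ t.1) (ψ t.1)) (1 / (T : ℝ))

/-- The translate `φ^h` of `φ ∈ C(ℝ,X)`, given by `φ^h(t) = φ(t + h)`. -/
def timeShift {X : Type*} [MetricSpace X] (φ : C(ℝ, X)) (h : ℝ) : C(ℝ, X) :=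
  ⟨fun t => φ (t + h), φ.continuous.comp (continuous_id.add continuous_const)⟩

/-- `𝔑_φ`: the family of sequences `{tₙ} ⊂ ℝ` with `φ^{tₙ} → φ` in `(C(ℝ,X),d)`. -/
def NClass {X : Type*} [MetricSpace X] (φ : C(ℝ, X)) : Set (ℕ → ℝ) :=
  {t | Tendsto (fun n => bebutovDist (timeShift φ (t n)) φ) atTop (𝓝 0)}

/-- `𝔐_φ`: the family of sequences `{tₙ} ⊂ ℝ` such that `{φ^{tₙ}}` converges in
`(C(ℝ,X),d)`. -/
def MClass {X : Type*} [MetricSpace X] (φ : C(ℝ, X)) : Set (ℕ → ℝ) :=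
  {t | ∃ ψ : C(ℝ, X), Tendsto (fun n => bebutovDist (timeShift φ (t n)) ψ) atTop (𝓝 0)}

/-- `𝔑^u_φ`: sequences in `𝔑_φ` with `φ^{s+tₙ} → φ^s` uniformly in `s ∈ ℝ`. -/
def NuClass {X : Type*} [MetricSpace X] (φ : C(ℝ, X)) : Set (ℕ → ℝ) :=
  {t | t ∈ NClass φ ∧ ∀ ε > (0 : ℝ), ∃ N : ℕ, ∀ n ≥ N, ∀ s : ℝ,
    bebutovDist (timeShift φ (s + t n)) (timeShift φ s) < ε}

/-- `𝔐^u_φ`: sequences in `𝔐_φ` such that `{φ^{s+tₙ}}` converges uniformly in `s ∈ ℝ`. -/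
def MuClass {X : Type*} [MetricSpace X] (φ : C(ℝ, X)) : Set (ℕ → ℝ) :=
  {t | t ∈ MClass φ ∧ ∃ ψ : ℝ → C(ℝ, X), ∀ ε > (0 : ℝ), ∃ N : ℕ, ∀ n ≥ N, ∀ s : ℝ,
    bebutovDist (timeShift φ (s + t n)) (ψ s) < ε}

/-- A subset `S ⊆ ℝ` is relatively dense if some length `l > 0` interval always meets it. -/
def RelativelyDense (S : Set ℝ) : Prop :=
  ∃ l > (0 : ℝ), ∀ a : ℝ, ∃ τ ∈ S, τ ∈ Set.Icc a (a + l)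

/-- `φ` is Poisson stable: for every `ε > 0` and `l > 0` there are `ε`-shifts `τ₊ > l`
and `τ₋ < −l`. -/
def PoissonStable {X : Type*} [MetricSpace X] (φ : C(ℝ, X)) : Prop :=
  ∀ ε > (0 : ℝ), ∀ l > (0 : ℝ),
    (∃ τ : ℝ, l < τ ∧ bebutovDist (timeShift φ τ) φ < ε) ∧
    (∃ τ : ℝ, τ < -l ∧ bebutovDist (timeShift φ τ) φ < ε)

/-- `φ` is almost recurrent in the sense of Bebutov. -/
def AlmostRecurrent {X : Type*} [MetricSpace X] (φ : C(ℝ, X)) : Prop :=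
  ∀ ε > (0 : ℝ), RelativelyDense {τ : ℝ | bebutovDist (timeShift φ τ) φ < ε}

/-- `τ` is an `ε`-almost period of `φ`: `ρ(φ(t+τ),φ(t)) < ε` for all `t`. -/
def IsAlmostPeriod {X : Type*} [MetricSpace X] (φ : C(ℝ, X)) (ε τ : ℝ) : Prop :=
  ∀ t : ℝ, dist (φ (t + τ)) (φ t) < ε

/-- `φ` is Bohr almost periodic: its set of `ε`-almost periods is relatively dense for
every `ε > 0`. -/
def BohrAlmostPeriodic {X : Type*} [MetricSpace X] (φ : C(ℝ, X)) : Prop :=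
  ∀ ε > (0 : ℝ), RelativelyDense {τ : ℝ | IsAlmostPeriod φ ε τ}

/-- `φ` is Lagrange stable: every sequence of translates has a subsequence converging in
the Bebutov metric (i.e. `{φ^h : h ∈ ℝ}` is relatively compact in `(C(ℝ,X),d)`). -/
def LagrangeStable {X : Type*} [MetricSpace X] (φ : C(ℝ, X)) : Prop :=
  ∀ h : ℕ → ℝ, ∃ (k : ℕ → ℕ) (ψ : C(ℝ, X)), StrictMono k ∧
    Tendsto (fun n => bebutovDist (timeShift φ (h (k n))) ψ) atTop (𝓝 0)

/-- `φ` is Birkhoff recurrent: almost recurrent and Lagrange stable. -/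
def BirkhoffRecurrent {X : Type*} [MetricSpace X] (φ : C(ℝ, X)) : Prop :=
  AlmostRecurrent φ ∧ LagrangeStable φ

/-- `φ` is Levitan almost periodic. -/
def LevitanAlmostPeriodic {X : Type*} [MetricSpace X] (φ : C(ℝ, X)) : Prop :=
  ∃ (Z : Type) (_ : MetricSpace Z) (_ : CompleteSpace Z) (χ : C(ℝ, Z)),
    BohrAlmostPeriodic χ ∧
    ∀ ε > (0 : ℝ), ∃ δ > (0 : ℝ), ∀ τ : ℝ, IsAlmostPeriod χ δ τ →
      bebutovDist (timeShift φ τ) φ < ε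

/-- `φ` is quasi-periodic with the spectrum of frequencies `ν₁,…,ν_k`. -/
def QuasiPeriodic {X : Type*} [MetricSpace X] (φ : C(ℝ, X)) {k : ℕ} (ν : Fin k → ℝ) :
    Prop :=
  LinearIndependent ℚ ν ∧
  ∃ Φ : C((Fin k → ℝ), X),
    (∀ v : Fin k → ℝ, Φ (fun i => v i + 2 * Real.pi) = Φ v) ∧
    ∀ t : ℝ, φ t = Φ (fun i => ν i * t)

/-- `φ` is pseudo-periodic: for every `ε > 0` and `l > 0` there exist `ε`-almost
periods `τ₊ > l` and `τ₋ < −l`. -/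
def PseudoPeriodic {X : Type*} [MetricSpace X] (φ : C(ℝ, X)) : Prop :=
  ∀ ε > (0 : ℝ), ∀ l > (0 : ℝ),
    (∃ τ : ℝ, l < τ ∧ IsAlmostPeriod φ ε τ) ∧
    (∃ τ : ℝ, τ < -l ∧ IsAlmostPeriod φ ε τ)

/-- `φ` is pseudo-recurrent. -/
def PseudoRecurrent {X : Type*} [MetricSpace X] (φ : C(ℝ, X)) : Prop :=
  ∀ ε > (0 : ℝ), ∀ l : ℝ, ∃ L : ℝ, l ≤ L ∧ ∀ τ₀ : ℝ, ∃ τ ∈ Set.Icc l L,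
    ∀ t : ℝ, |t| ≤ 1 / ε → dist (φ (t + τ₀ + τ)) (φ (t + τ₀)) ≤ ε

section Bebutov

variable {X : Type*} [MetricSpace X]

lemma bddAbove_range_dist_Icc (φ ψ : C(ℝ, X)) (T : ℝ) :
    BddAbove (Set.range fun t : Set.Icc (-T) T => dist (φ t) (ψ t)) := by
  simpa only [Set.image_eq_range] using
    isCompact_Icc.bddAbove_image (φ.continuous.dist ψ.continuous).continuousOn

lemma bddAbove_range_bebutov (φ ψ : C(ℝ, X)) :
    BddAbove (Set.range fun T : Set.Ioi (0 : ℝ) =>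
      min (⨆ t : Set.Icc (-(T : ℝ)) T, dist (φ t) (ψ t)) (1 / (T : ℝ))) := by
  refine ⟨max (⨆ t : Set.Icc (-1 : ℝ) 1, dist (φ t) (ψ t)) 1, ?_⟩
  rintro _ ⟨⟨T, hT0 : 0 < T⟩, rfl⟩
  rcases le_total T 1 with hT | hT
  · have : Nonempty (Set.Icc (-T) T) := ⟨⟨0, by simp [hT0.le]⟩⟩
    refine le_max_of_le_left ((min_le_left _ _).trans (ciSup_le fun t => ?_))
    exact le_ciSup (f := fun t : Set.Icc (-1 : ℝ) 1 => dist (φ t) (ψ t))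
      (bddAbove_range_dist_Icc φ ψ 1) ⟨t, by linarith [t.2.1], by linarith [t.2.2]⟩
  · exact le_max_of_le_right ((min_le_right _ _).trans ((div_le_one hT0).mpr hT))

lemma bebutovDist_nonneg (φ ψ : C(ℝ, X)) : 0 ≤ bebutovDist φ ψ :=
  Real.iSup_nonneg fun T =>
    le_min (Real.iSup_nonneg fun _ => dist_nonneg) (one_div_pos.mpr T.2).le

@[simp]
lemma bebutovDist_self (φ : C(ℝ, X)) : bebutovDist φ φ = 0 := by
  have hmin (T : Set.Ioi (0 : ℝ)) : min (0 : ℝ) (T : ℝ)⁻¹ = 0 :=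
    min_eq_left (inv_nonneg.mpr (le_of_lt T.2))
  simp [bebutovDist, hmin]

lemma bebutovDist_comm (φ ψ : C(ℝ, X)) : bebutovDist φ ψ = bebutovDist ψ φ := by
  simp only [bebutovDist, dist_comm]

lemma min_add_le_min_add_min {x y c : ℝ} (hx : 0 ≤ x) (hy : 0 ≤ y) (hc : 0 ≤ c) :
    min (x + y) c ≤ min x c + min y c := by
  rcases le_total x c with h | h <;> rcases le_total y c with h' | h' <;>
    simp only [min_eq_left, min_eq_right, *] <;> grind

lemma bebutovDist_triangle (φ ψ χ : C(ℝ, X)) :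
    bebutovDist φ χ ≤ bebutovDist φ ψ + bebutovDist ψ χ := by
  have : Nonempty (Set.Ioi (0 : ℝ)) := ⟨⟨1, Set.mem_Ioi.mpr one_pos⟩⟩
  refine ciSup_le fun T => ?_
  have : Nonempty (Set.Icc (-(T : ℝ)) T) := ⟨⟨0, by simp [(Set.mem_Ioi.mp T.2).le]⟩⟩
  have hsup : ⨆ t : Set.Icc (-(T : ℝ)) T, dist (φ t) (χ t) ≤
      (⨆ t : Set.Icc (-(T : ℝ)) T, dist (φ t) (ψ t)) +
        ⨆ t : Set.Icc (-(T : ℝ)) T, dist (ψ t) (χ t) :=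
    ciSup_le fun t => (dist_triangle _ (ψ t) _).trans <| add_le_add
      (le_ciSup (bddAbove_range_dist_Icc φ ψ T) t) (le_ciSup (bddAbove_range_dist_Icc ψ χ T) t)
  calc _ ≤ min ((⨆ t : Set.Icc (-(T : ℝ)) T, dist (φ t) (ψ t)) +
          ⨆ t : Set.Icc (-(T : ℝ)) T, dist (ψ t) (χ t)) (1 / (T : ℝ)) :=
        min_le_min_right _ hsup
    _ ≤ _ := min_add_le_min_add_min (Real.iSup_nonneg fun _ => dist_nonneg)
        (Real.iSup_nonneg fun _ => dist_nonneg) (one_div_pos.mpr T.2).le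
    _ ≤ bebutovDist φ ψ + bebutovDist ψ χ := add_le_add
        (le_ciSup (bddAbove_range_bebutov φ ψ) T) (le_ciSup (bddAbove_range_bebutov ψ χ) T)

end Bebutov

lemma Filter.eventually_atTop_interleave_iff {α : Type*} {p : α → Prop} (s₁ s₂ : Stream' α) :
    (∀ᶠ n in atTop, p ((s₁ ⋈ s₂).get n)) ↔
      (∀ᶠ n in atTop, p (s₁.get n)) ∧ ∀ᶠ n in atTop, p (s₂.get n) := by
  refine ⟨fun h => ⟨?_, ?_⟩, fun ⟨h₁, h₂⟩ => Eventually.atTop_of_arithmetic two_ne_zero ?_⟩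
  · simpa only [Stream'.get_interleave_left] using
      (tendsto_atTop_mono (fun n => Nat.le_mul_of_pos_left n two_pos) tendsto_id).eventually h
  · have h2n1 : Tendsto (fun n => 2 * n + 1) atTop atTop :=
      tendsto_atTop_mono (fun n => Nat.le_succ_of_le (Nat.le_mul_of_pos_left n two_pos)) tendsto_id
    simpa only [Stream'.get_interleave_right] using h2n1.eventually h
  · intro k hk
    interval_cases k
    · simpa only [add_zero, Stream'.get_interleave_left] using h₁
    · simpa only [Stream'.get_interleave_right] using h₂

section Shift

variable {X : Type*} [MetricSpace X]

@[simp]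
lemma timeShift_zero (φ : C(ℝ, X)) : timeShift φ 0 = φ := by
  ext t; simp [timeShift]

def TendstoUniformlyTimeShift (φ : C(ℝ, X)) (t : ℕ → ℝ) (Φ : ℝ → C(ℝ, X)) : Prop :=
  ∀ ε > 0, ∀ᶠ n in atTop, ∀ s, bebutovDist (timeShift φ (s + t n)) (Φ s) < ε

lemma tendstoUniformlyTimeShift_iff {φ : C(ℝ, X)} {t : ℕ → ℝ} {Φ : ℝ → C(ℝ, X)} :
    TendstoUniformlyTimeShift φ t Φ ↔ ∀ ε > 0, ∃ N : ℕ, ∀ n ≥ N, ∀ s,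
      bebutovDist (timeShift φ (s + t n)) (Φ s) < ε := by
  simp only [TendstoUniformlyTimeShift, eventually_atTop]

lemma TendstoUniformlyTimeShift.tendsto_bebutovDist {φ : C(ℝ, X)} {t : ℕ → ℝ}
    {Φ : ℝ → C(ℝ, X)} (h : TendstoUniformlyTimeShift φ t Φ) :
    Tendsto (fun n => bebutovDist (timeShift φ (t n)) (Φ 0)) atTop (𝓝 0) := by
  refine tendsto_order.2 ⟨fun a ha => Eventually.of_forall fun n => ?_, fun ε hε => ?_⟩
  · exact ha.trans_le (bebutovDist_nonneg _ _)
  · filter_upwards [h ε hε] with n hn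
    simpa using hn 0

lemma mem_MuClass_iff {φ : C(ℝ, X)} {t : ℕ → ℝ} :
    t ∈ MuClass φ ↔ ∃ Φ, TendstoUniformlyTimeShift φ t Φ :=
  ⟨fun ⟨_, Φ, h⟩ => ⟨Φ, tendstoUniformlyTimeShift_iff.2 h⟩,
    fun ⟨Φ, h⟩ => ⟨⟨Φ 0, h.tendsto_bebutovDist⟩, Φ, tendstoUniformlyTimeShift_iff.1 h⟩⟩

lemma mem_NuClass_iff {φ : C(ℝ, X)} {t : ℕ → ℝ} :
    t ∈ NuClass φ ↔ TendstoUniformlyTimeShift φ t (timeShift φ) :=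
  ⟨fun ⟨_, h⟩ => tendstoUniformlyTimeShift_iff.2 h, fun h =>
    ⟨by simpa [NClass] using h.tendsto_bebutovDist, tendstoUniformlyTimeShift_iff.1 h⟩⟩

lemma tendstoUniformlyTimeShift_const_zero (φ : C(ℝ, X)) :
    TendstoUniformlyTimeShift φ (fun _ => 0) (timeShift φ) := fun ε hε =>
  Eventually.of_forall fun s => by simpa using hε

lemma TendstoUniformlyTimeShift.of_const_zero {φ : C(ℝ, X)} {t : ℕ → ℝ} {Φ : ℝ → C(ℝ, X)}
    (ht : TendstoUniformlyTimeShift φ t Φ) (h₀ : TendstoUniformlyTimeShift φ (fun _ => 0) Φ) :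
    TendstoUniformlyTimeShift φ t (timeShift φ) := by
  intro ε hε
  filter_upwards [ht (ε / 2) (half_pos hε), h₀ (ε / 2) (half_pos hε)] with n hn hn₀ s
  calc bebutovDist (timeShift φ (s + t n)) (timeShift φ s)
      ≤ bebutovDist (timeShift φ (s + t n)) (Φ s) + bebutovDist (Φ s) (timeShift φ s) :=
        bebutovDist_triangle _ _ _
    _ < ε / 2 + ε / 2 := by
        refine add_lt_add (hn s) ?_
        simpa [bebutovDist_comm] using hn₀ s
    _ = ε := add_halves ε

lemma tendstoUniformlyTimeShift_interleave_iff {φ : C(ℝ, X)} {t t' : ℕ → ℝ}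
    {Φ : ℝ → C(ℝ, X)} :
    TendstoUniformlyTimeShift φ (t ⋈ t') Φ ↔
      TendstoUniformlyTimeShift φ t Φ ∧ TendstoUniformlyTimeShift φ t' Φ := by
  simp only [TendstoUniformlyTimeShift, ← forall_and]
  exact forall₂_congr fun ε _ => eventually_atTop_interleave_iff (p := fun τ =>
    ∀ s, bebutovDist (timeShift φ (s + τ)) (Φ s) < ε) t t'

end Shift

theorem MuClass_subset_imp_NuClass_subset_general
    {X Y : Type*} [MetricSpace X] [MetricSpace Y]
    (φ : C(ℝ, X)) (ψ : C(ℝ, Y)) (h : MuClass ψ ⊆ MuClass φ) :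
    NuClass ψ ⊆ NuClass φ := by
  intro t ht
  rw [mem_NuClass_iff] at ht ⊢
  have ht₀ : t ⋈ Stream'.const 0 ∈ MuClass ψ := mem_MuClass_iff.2
    ⟨timeShift ψ, tendstoUniformlyTimeShift_interleave_iff.2
      ⟨ht, tendstoUniformlyTimeShift_const_zero ψ⟩⟩
  obtain ⟨Φ, hΦ⟩ := mem_MuClass_iff.1 (h ht₀)
  obtain ⟨hΦt, hΦ₀⟩ := tendstoUniformlyTimeShift_interleave_iff.1 hΦ
  exact hΦt.of_const_zero hΦ₀

/-- If `𝔐^u_ψ ⊆ 𝔐^u_φ`, then `𝔑^u_ψ ⊆ 𝔑^u_φ`. -/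
theorem MuClass_subset_imp_NuClass_subset
    {X Y : Type*} [MetricSpace X] [CompleteSpace X] [MetricSpace Y] [CompleteSpace Y]
    (φ : C(ℝ, X)) (ψ : C(ℝ, Y)) (h : MuClass ψ ⊆ MuClass φ) :
    NuClass ψ ⊆ NuClass φ :=
  MuClass_subset_imp_NuClass_subset_general φ ψ h
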